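/- Under the same abstract setting, for l > n and m > n: the closure of U under the reflection rule Π_m-RR^n(U+φ) equals U + {Q^k_n(φ) : k ∈ ω}, where Q^0_n(φ) = ⟨n⟩φ and Q^{k+1}_n(φ) = ⟨n⟩(φ ∧ Q^k_n(φ)); in particular the closure is independent of m as long as m > n. -/

import Mathlib

/-- Formulas of polymodal provability logic GLP_ω with modalities [n], n ∈ ℕ. -/
inductive GLPFormula : Type where
  | bot : GLPFormula
  | var : ℕ → GLPFormula
  | imp : GLPFormula → GLPFormula → GLPFormula
  | and : GLPFormula → GLPFormula → GLPFormula
  | box : ℕ → GLPFormula → GLPFormula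

namespace GLPFormula

def neg (A : GLPFormula) : GLPFormula := imp A bot
def top : GLPFormula := neg bot
def dia (n : ℕ) (A : GLPFormula) : GLPFormula := neg (box n (neg A))
def iff (A B : GLPFormula) : GLPFormula := and (imp A B) (imp B A)

/-- A formula is a propositional tautology if every boolean valuation commuting with
the propositional connectives (and arbitrary on boxes and variables) makes it true. -/
def IsTaut (A : GLPFormula) : Prop :=
  ∀ v : GLPFormula → Bool, v bot = false →
    (∀ B C, v (imp B C) = (!v B || v C)) →
    (∀ B C, v (and B C) = (v B && v C)) →
    v A = true

/-- Hilbert-style provability in GLP_ω. -/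
inductive Proof : GLPFormula → Prop where
  | taut {A} : IsTaut A → Proof A
  | k {n A B} : Proof ((box n (A.imp B)).imp ((box n A).imp (box n B)))
  | lob {n A} : Proof ((box n ((box n A).imp A)).imp (box n A))
  | mono {m n : ℕ} {A} : m ≤ n → Proof ((box m A).imp (box n A))
  | negIntro {m n : ℕ} {A} : m < n → Proof ((dia m A).imp (box n (dia m A)))
  | mp {A B} : Proof (A.imp B) → Proof A → Proof B
  | nec {n A} : Proof A → Proof (box n A)

/-- Q^0_n(φ) = ⟨n⟩φ, Q^{k+1}_n(φ) = ⟨n⟩(φ ∧ Q^k_n(φ)). -/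
def Q (n : ℕ) (φ : GLPFormula) : ℕ → GLPFormula
  | 0 => dia n φ
  | k + 1 => dia n (φ.and (Q n φ k))

/-- Worms: iterated consistency statements. -/
inductive IsWorm : GLPFormula → Prop where
  | top : IsWorm top
  | dia (n : ℕ) {A} : IsWorm A → IsWorm (dia n A)

end GLPFormula

open GLPFormula

/-- Derivability from a theory `U` (a set of formulas): GLP theorems and members of `U`
are derivable, and derivability is closed under modus ponens. -/
inductive Deriv (U : Set GLPFormula) : GLPFormula → Prop where
  | ax {A} : A ∈ U → Deriv U A
  | glp {A} : Proof A → Deriv U A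
  | mp {A B} : Deriv U (A.imp B) → Deriv U A → Deriv U B

/-- Closure of the theory `U` under the reflection rule Π-RR^n(U+φ):
from ψ ∈ Pi infer ⟨n⟩(ψ ∧ φ). -/
inductive RRClosure (U : Set GLPFormula) (Pi : Set GLPFormula) (n : ℕ) (φ : GLPFormula) :
    GLPFormula → Prop where
  | base {A} : Deriv U A → RRClosure U Pi n φ A
  | mp {A B} : RRClosure U Pi n φ (A.imp B) → RRClosure U Pi n φ A → RRClosure U Pi n φ B
  | rr {ψ} : ψ ∈ Pi → RRClosure U Pi n φ ψ → RRClosure U Pi n φ (dia n (ψ.and φ))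
/-!
Each `Q^k_n(φ)` is produced by `k + 1` applications of the rule, starting from `⊤`.
Conversely, `Q^{k+1}_n(φ) → Q^k_n(φ)` is provable (transitivity of `[n]`, which follows from
Löb's axiom), so a derivation from `U + {Q^k_n(φ)}` uses a single `Q^k_n(φ)`. If
`U ⊢ Q^k_n(φ) → ψ`, necessitation and monotonicity of `⟨n⟩` give
`U ⊢ Q^{k+1}_n(φ) → ⟨n⟩(ψ ∧ φ)`, so every application of the rule is already derivable.
Hence the closure depends on the class of premises only through containing `⊤` and the
`Q^k_n(φ)`.
-/

namespace GLPFormula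

variable {n : ℕ} {φ A B C : GLPFormula}

theorem isTaut_imp_self : IsTaut (A.imp A) := by
  intro v _ hi _; simp only [hi]; grind

theorem isTaut_imp_intro : IsTaut (A.imp (B.imp A)) := by
  intro v _ hi _; simp only [hi]; grind

theorem isTaut_imp_trans : IsTaut ((A.imp B).imp ((B.imp C).imp (A.imp C))) := by
  intro v _ hi _; simp only [hi]; grind

theorem isTaut_imp_imp_distrib : IsTaut ((A.imp (B.imp C)).imp ((A.imp B).imp (A.imp C))) := by
  intro v _ hi _; simp only [hi]; grind

theorem isTaut_mt : IsTaut ((A.imp B).imp (B.neg.imp A.neg)) := by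
  intro v hb hi _; simp only [neg, hi, hb]; grind

theorem isTaut_imp_neg_neg : IsTaut (A.imp A.neg.neg) := by
  intro v hb hi _; simp only [neg, hi, hb]; grind

theorem isTaut_and_left : IsTaut ((A.and B).imp A) := by
  intro v _ hi ha; simp only [hi, ha]; grind

theorem isTaut_and_right : IsTaut ((A.and B).imp B) := by
  intro v _ hi ha; simp only [hi, ha]; grind

theorem isTaut_and_comm : IsTaut ((A.and B).imp (B.and A)) := by
  intro v _ hi ha; simp only [hi, ha]; grind

theorem isTaut_imp_imp_and : IsTaut ((B.imp C).imp (A.imp (B.imp (A.and C)))) := by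
  intro v _ hi ha; simp only [hi, ha]; grind

theorem isTaut_imp_and_imp_and : IsTaut ((B.imp C).imp ((A.and B).imp (C.and A))) := by
  intro v _ hi ha; simp only [hi, ha]; grind

theorem isTaut_top : IsTaut top := by
  intro v hb hi _; simp only [top, neg, hi, hb]; grind

theorem isTaut_top_and : IsTaut ((top.and A).imp A) := by
  intro v hb hi ha; simp only [top, neg, hi, ha, hb]; grind

namespace Proof

theorem imp_self : Proof (A.imp A) := taut isTaut_imp_self

theorem imp_trans (h₁ : Proof (A.imp B)) (h₂ : Proof (B.imp C)) : Proof (A.imp C) :=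
  ((taut isTaut_imp_trans).mp h₁).mp h₂

theorem mt (h : Proof (A.imp B)) : Proof (B.neg.imp A.neg) := (taut isTaut_mt).mp h

theorem box_mono (h : Proof (A.imp B)) : Proof ((box n A).imp (box n B)) := k.mp (nec h)

theorem dia_mono (h : Proof (A.imp B)) : Proof ((dia n A).imp (dia n B)) :=
  mt (box_mono (mt h))

theorem box_imp_dia_imp : Proof ((box n (A.imp B)).imp ((dia n A).imp (dia n B))) :=
  imp_trans (imp_trans (box_mono (taut isTaut_mt)) k) (taut isTaut_mt)

-- With `D := A ∧ [n]A`, `A → ([n]D → D)` is provable, so Löb's axiom yields `[n]A → [n]D`.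
theorem box_imp_box_box : Proof ((box n A).imp (box n (box n A))) := by
  have hD : Proof (A.imp ((box n (A.and (box n A))).imp (A.and (box n A)))) :=
    (taut isTaut_imp_imp_and).mp (box_mono (taut isTaut_and_left))
  exact imp_trans (imp_trans (box_mono hD) lob) (box_mono (taut isTaut_and_right))

theorem dia_dia_imp_dia : Proof ((dia n (dia n A)).imp (dia n A)) :=
  mt (imp_trans box_imp_box_box (box_mono (taut isTaut_imp_neg_neg)))

theorem imp_of_le {f : ℕ → GLPFormula} (hf : ∀ k, Proof ((f (k + 1)).imp (f k))) {j k : ℕ}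
    (hjk : j ≤ k) : Proof ((f k).imp (f j)) := by
  induction hjk with
  | refl => exact imp_self
  | step _ ih => exact imp_trans (hf _) ih

end Proof

theorem Q_succ_imp (n : ℕ) (φ : GLPFormula) (k : ℕ) : Proof ((Q n φ (k + 1)).imp (Q n φ k)) := by
  refine Proof.imp_trans (Proof.dia_mono (.taut isTaut_and_right)) ?_
  cases k <;> exact Proof.dia_dia_imp_dia

end GLPFormula

namespace Deriv

variable {U V : Set GLPFormula} {A B C X : GLPFormula}

theorem mono (hUV : U ⊆ V) (h : Deriv U A) : Deriv V A := by
  induction h with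
  | ax h => exact ax (hUV h)
  | glp h => exact glp h
  | mp _ _ ih₁ ih₂ => exact ih₁.mp ih₂

theorem imp_intro (h : Deriv U A) : Deriv U (X.imp A) := (glp (.taut isTaut_imp_intro)).mp h

theorem imp_trans (h₁ : Deriv U (A.imp B)) (h₂ : Deriv U (B.imp C)) : Deriv U (A.imp C) :=
  ((glp (.taut isTaut_imp_trans)).mp h₁).mp h₂

theorem imp_mp (h₁ : Deriv U (X.imp (A.imp B))) (h₂ : Deriv U (X.imp A)) : Deriv U (X.imp B) :=
  ((glp (.taut isTaut_imp_imp_distrib)).mp h₁).mp h₂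

theorem exists_imp_of_union_range {f : ℕ → GLPFormula}
    (hf : ∀ k, Proof ((f (k + 1)).imp (f k))) (h : Deriv (U ∪ Set.range f) A) :
    ∃ k, Deriv U ((f k).imp A) := by
  induction h with
  | ax h =>
    rcases h with hU | ⟨k, rfl⟩
    · exact ⟨0, (ax hU).imp_intro⟩
    · exact ⟨k, glp Proof.imp_self⟩
  | glp h => exact ⟨0, (glp h).imp_intro⟩
  | mp _ _ ih₁ ih₂ =>
    obtain ⟨k₁, h₁⟩ := ih₁
    obtain ⟨k₂, h₂⟩ := ih₂
    have weaken {k} (hk : k ≤ max k₁ k₂) {B} (h : Deriv U ((f k).imp B)) :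
        Deriv U ((f (max k₁ k₂)).imp B) :=
      (glp (Proof.imp_of_le hf hk)).imp_trans h
    exact ⟨max k₁ k₂, (weaken (le_max_left _ _) h₁).imp_mp (weaken (le_max_right _ _) h₂)⟩

theorem Q_succ_imp_dia {n k : ℕ} {φ ψ : GLPFormula}
    (hnec : ∀ χ, Deriv U χ → Deriv U (box n χ)) (h : Deriv U ((Q n φ k).imp ψ)) :
    Deriv U ((Q n φ (k + 1)).imp (dia n (ψ.and φ))) :=
  (glp Proof.box_imp_dia_imp).mp
    ((glp (Proof.box_mono (.taut isTaut_imp_and_imp_and))).mp (hnec _ h))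

end Deriv

namespace RRClosure

variable {U Pi : Set GLPFormula} {n : ℕ} {φ A : GLPFormula}

theorem deriv_union_range_Q (hnec : ∀ χ, Deriv U χ → Deriv U (box n χ))
    (h : RRClosure U Pi n φ A) : Deriv (U ∪ Set.range (Q n φ)) A := by
  induction h with
  | base h => exact h.mono Set.subset_union_left
  | mp _ _ ih₁ ih₂ => exact ih₁.mp ih₂
  | rr _ _ ih =>
    obtain ⟨k, hk⟩ := Deriv.exists_imp_of_union_range (Q_succ_imp n φ) ih
    exact ((hk.Q_succ_imp_dia hnec).mono Set.subset_union_left).mp (.ax (.inr ⟨k + 1, rfl⟩))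

theorem Q_of_top_mem (htop : top ∈ Pi) (hQ : ∀ k, Q n φ k ∈ Pi) :
    ∀ k, RRClosure U Pi n φ (Q n φ k)
  | 0 => (base (.glp (Proof.dia_mono (.taut isTaut_top_and)))).mp
      (rr htop (base (.glp (.taut isTaut_top))))
  | k + 1 => (base (.glp (Proof.dia_mono (.taut isTaut_and_comm)))).mp
      (rr (hQ k) (Q_of_top_mem htop hQ k))

theorem of_deriv_union_range_Q (htop : top ∈ Pi) (hQ : ∀ k, Q n φ k ∈ Pi)
    (h : Deriv (U ∪ Set.range (Q n φ)) A) : RRClosure U Pi n φ A := by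
  induction h with
  | ax h =>
    rcases h with hU | ⟨k, rfl⟩
    · exact base (.ax hU)
    · exact Q_of_top_mem htop hQ k
  | glp h => exact base (.glp h)
  | mp _ _ ih₁ ih₂ => exact ih₁.mp ih₂

end RRClosure

theorem rrClosure_iff_deriv_union_range_Q {U Pi : Set GLPFormula} {n : ℕ} {φ A : GLPFormula}
    (htop : top ∈ Pi) (hQ : ∀ k, Q n φ k ∈ Pi) (hnec : ∀ χ, Deriv U χ → Deriv U (box n χ)) :
    RRClosure U Pi n φ A ↔ Deriv (U ∪ Set.range (Q n φ)) A :=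
  ⟨RRClosure.deriv_union_range_Q hnec, RRClosure.of_deriv_union_range_Q htop hQ⟩

theorem rr_closure_eq_Q_general (U Pim Pil : Set GLPFormula) (n : ℕ) (φ : GLPFormula)
    (htopm : GLPFormula.top ∈ Pim) (htopl : GLPFormula.top ∈ Pil)
    (hQm : ∀ k, Q n φ k ∈ Pim) (hQl : ∀ k, Q n φ k ∈ Pil)
    (hnec : ∀ χ, Deriv U χ → Deriv U (box n χ)) :
    ∀ A, (RRClosure U Pim n φ A ↔ Deriv (U ∪ Set.range (Q n φ)) A) ∧
      (RRClosure U Pil n φ A ↔ RRClosure U Pim n φ A) := by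
  intro A
  have hm := rrClosure_iff_deriv_union_range_Q (A := A) htopm hQm hnec
  have hl := rrClosure_iff_deriv_union_range_Q (A := A) htopl hQl hnec
  exact ⟨hm, hl.trans hm.symm⟩

/-- for l > n and m > n, the closure of U under Π_m-RR^n(U+φ) equals
U + {Q^k_n(φ) : k ∈ ω}; in particular it is independent of m as long as m > n.
Here Π_m (resp. Π_l) is any formula class containing ⊤ and all the Q^k_n(φ)
(each Q^k_n(φ) lies in Π_{n+1} ⊆ Π_m), and U is closed under necessitation. -/
theorem rr_closure_eq_Q (U Pim Pil : Set GLPFormula) (l m n : ℕ)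
    (hln : n < l) (hmn : n < m) (φ : GLPFormula)
    (htopm : GLPFormula.top ∈ Pim) (htopl : GLPFormula.top ∈ Pil)
    (hQm : ∀ k, Q n φ k ∈ Pim) (hQl : ∀ k, Q n φ k ∈ Pil)
    (hnec : ∀ χ, Deriv U χ → Deriv U (box n χ)) :
    ∀ A, (RRClosure U Pim n φ A ↔ Deriv (U ∪ Set.range (Q n φ)) A) ∧
      (RRClosure U Pil n φ A ↔ RRClosure U Pim n φ A) :=
  rr_closure_eq_Q_general U Pim Pil n φ htopm htopl hQm hQl hnec
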